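/- arXiv:2108.06752 — 2 statements merged into one kernel-verified Lean document; each statement's English description precedes it below -/
import Mathlib

section
/- Let g(x) divide x^m - 1 over F_q with x^m - 1 = g(x)h(x), and let f_1,...,f_ℓ be polynomials with gcd(f_i(x), h(x)) = 1 for all i. Let C be the ℓ-quasi-cyclic code of length n = mℓ generated as an F_q[x]-module by (f_1(x)g(x), ..., f_ℓ(x)g(x)) in (F_q[x]/(x^m-1))^ℓ. Then C has dimension k = m - deg(g(x)). -/
open Polynomial

set_option synthInstance.maxHeartbeats 1000000
set_option maxHeartbeats 1000000

/-- ASR theorem, dimension part: if `x^m - 1 = g h` and `gcd(f_i, h) = 1` for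
all `i`, then the 1-generator `ℓ`-quasi-cyclic code generated as an
`F_q[x]`-module by `(f_1 g, ..., f_ℓ g)` in `(F_q[x]/(x^m-1))^ℓ` has
`F_q`-dimension `m - deg g`. -/
theorem asr_dimension {F : Type*} [Field F] [Fintype F] (m ℓ : ℕ) (hm : 0 < m) (hl : 0 < ℓ)
    (g h : Polynomial F) (hgh : (X : Polynomial F) ^ m - 1 = g * h)
    (f : Fin ℓ → Polynomial F) (hf : ∀ i, IsCoprime (f i) h) :
    Module.finrank F
      ((Submodule.span (Polynomial F)
        {(fun i => Ideal.Quotient.mk (Ideal.span {(X : Polynomial F) ^ m - 1}) (f i * g) :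
          Fin ℓ → Polynomial F ⧸ Ideal.span {(X : Polynomial F) ^ m - 1})}).restrictScalars F) =
      m - g.natDegree := by
  classical
  set I : Ideal (Polynomial F) := Ideal.span {(X : Polynomial F) ^ m - 1} with hI
  set v : Fin ℓ → Polynomial F ⧸ I :=
    (fun i => Ideal.Quotient.mk I (f i * g)) with hv
  have hsmul : ∀ p a : Polynomial F,
      p • (Ideal.Quotient.mk I a) = Ideal.Quotient.mk I (p * a) := fun _ _ => rfl
  have hXm : ((X : Polynomial F) ^ m - 1).natDegree = m := by
    simpa using (natDegree_X_pow_sub_C (n := m) (r := (1 : F)))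
  have hXm0 : (X : Polynomial F) ^ m - 1 ≠ 0 := by
    intro h0
    rw [h0] at hXm
    simp at hXm
    omega
  have hgh0 : g * h ≠ 0 := hgh ▸ hXm0
  have hg0 : g ≠ 0 := left_ne_zero_of_mul hgh0
  have hh0 : h ≠ 0 := right_ne_zero_of_mul hgh0
  have hdeg : m = g.natDegree + h.natDegree := by
    rw [← hXm, hgh, natDegree_mul hg0 hh0]
  set φ : Polynomial F →ₗ[Polynomial F] (Fin ℓ → Polynomial F ⧸ I) :=
    LinearMap.toSpanSingleton (Polynomial F) _ v with hφ
  have hker : LinearMap.ker φ = (Ideal.span {h} : Ideal (Polynomial F)) := by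
    ext p
    simp only [LinearMap.mem_ker, hφ, LinearMap.toSpanSingleton_apply,
      Ideal.mem_span_singleton]
    constructor
    · intro hp
      have h1 := congrFun hp ⟨0, hl⟩
      simp only [hv, Pi.smul_apply, Pi.zero_apply, hsmul] at h1
      have hmem : p * (f ⟨0, hl⟩ * g) ∈ I := Ideal.Quotient.eq_zero_iff_mem.mp h1
      rw [hI, Ideal.mem_span_singleton, hgh] at hmem
      have hdvd : h ∣ p * f ⟨0, hl⟩ := by
        have h2 : h * g ∣ (p * f ⟨0, hl⟩) * g := by
          rw [mul_comm h g]
          calc g * h ∣ p * (f ⟨0, hl⟩ * g) := hmem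
          _ = (p * f ⟨0, hl⟩) * g := by ring
        exact (mul_dvd_mul_iff_right hg0).mp h2
      exact (hf ⟨0, hl⟩).symm.dvd_of_dvd_mul_right hdvd
    · intro hp
      funext i
      simp only [hv, Pi.smul_apply, Pi.zero_apply, hsmul]
      rw [Ideal.Quotient.eq_zero_iff_mem, hI, Ideal.mem_span_singleton, hgh]
      obtain ⟨c, rfl⟩ := hp
      exact ⟨c * f i, by ring⟩
  have hspan : Submodule.span (Polynomial F) {v} = LinearMap.range φ :=
    LinearMap.span_singleton_eq_range (Polynomial F) _ v
  let e1 : (Polynomial F ⧸ LinearMap.ker φ) ≃ₗ[Polynomial F] LinearMap.range φ :=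
    φ.quotKerEquivRange
  let e2 : (Submodule.span (Polynomial F) {v}).restrictScalars F
      ≃ₗ[Polynomial F] Submodule.span (Polynomial F) {v} :=
    Submodule.restrictScalarsEquiv F (Polynomial F) (Fin ℓ → Polynomial F ⧸ I) (Submodule.span (Polynomial F) {v})
  have hrank1 : Module.finrank F ((Submodule.span (Polynomial F) {v}).restrictScalars F) =
      Module.finrank F (Polynomial F ⧸ LinearMap.ker φ) := by
    refine LinearEquiv.finrank_eq ?_
    exact ((e2.restrictScalars F).trans
      ((LinearEquiv.ofEq _ _ hspan).restrictScalars F)).trans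
      ((e1.restrictScalars F).symm)
  rw [hrank1, hker]
  have hfr : Module.finrank F (Polynomial F ⧸ (Ideal.span {h} : Ideal (Polynomial F)))
      = h.natDegree := by
    have hpb := (AdjoinRoot.powerBasis hh0).finrank
    exact hpb
  rw [hfr]
  omega
end

section
/- With the hypotheses of the ASR theorem (x^m - 1 = g(x)h(x), gcd(f_i, h) = 1 for all i = 1,...,ℓ), the minimum Hamming weight d' of the quasi-cyclic code C generated by (f_1 g, ..., f_ℓ g) satisfies d' ≥ ℓ·d, where d is the minimum distance of the cyclic code of length m generated by g(x). -/
open Polynomial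

/-! Since `x^m - 1 = g h` and `f_i` is prime to `h`, the component `p f_i g` vanishes
modulo `x^m - 1` exactly when `h ∣ p`, a condition independent of `i`. So a nonzero codeword
has all `ℓ` components nonzero, each a nonzero codeword of the cyclic code generated by `g`,
hence each of weight at least `d`. -/

theorem mul_dvd_mul_mul_iff_of_isCoprime {R : Type*} [CommRing R] [IsDomain R]
    {g h a p : R} (hg : g ≠ 0) (ha : IsCoprime a h) : g * h ∣ p * a * g ↔ h ∣ p := by
  rw [mul_comm g h, mul_dvd_mul_iff_right hg]
  exact ⟨ha.symm.dvd_of_dvd_mul_right, fun hp => hp.mul_right a⟩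

theorem modByMonic_mul_mul_eq_zero_iff {R : Type*} [CommRing R] [IsDomain R]
    {g h a p : R[X]} (hgh : (g * h).Monic) (ha : IsCoprime a h) :
    (p * a * g) %ₘ (g * h) = 0 ↔ h ∣ p := by
  have hg : g ≠ 0 := left_ne_zero_of_mul hgh.ne_zero
  rw [modByMonic_eq_zero_iff_dvd hgh, mul_dvd_mul_mul_iff_of_isCoprime hg ha]

theorem asr_minimum_distance_general {F : Type*} [Field F] (m ℓ : ℕ) (hm : 0 < m)
    (g h : Polynomial F) (hgh : (X : Polynomial F) ^ m - 1 = g * h)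
    (f : Fin ℓ → Polynomial F) (hf : ∀ i, IsCoprime (f i) h)
    (d : ℕ)
    (hd_lb : ∀ p : Polynomial F, (p * g) %ₘ ((X : Polynomial F) ^ m - 1) ≠ 0 →
      d ≤ ((p * g) %ₘ ((X : Polynomial F) ^ m - 1)).support.card) :
    ∀ p : Polynomial F,
      (fun i => (p * f i * g) %ₘ ((X : Polynomial F) ^ m - 1) : Fin ℓ → Polynomial F) ≠ 0 →
      ℓ * d ≤ ∑ i : Fin ℓ, ((p * f i * g) %ₘ ((X : Polynomial F) ^ m - 1)).support.card := by
  intro p hp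
  have hmonic : (g * h).Monic := hgh ▸ by simpa using monic_X_pow_sub_C (1 : F) hm.ne'
  have hcomponent : ∀ i, (p * f i * g) %ₘ ((X : Polynomial F) ^ m - 1) ≠ 0 := by
    intro i hi
    rw [hgh, modByMonic_mul_mul_eq_zero_iff hmonic (hf i)] at hi
    apply hp
    funext j
    rw [Pi.zero_apply, hgh]
    exact (modByMonic_mul_mul_eq_zero_iff hmonic (hf j)).mpr hi
  calc ℓ * d = ∑ _i : Fin ℓ, d := by simp
    _ ≤ _ := Finset.sum_le_sum fun i _ => hd_lb (p * f i) (hcomponent i)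

/-- ASR theorem, distance part: with `x^m - 1 = g h` and `gcd(f_i, h) = 1` for
all `i`, every nonzero codeword of the 1-generator `ℓ`-quasi-cyclic code
generated by `(f_1 g, ..., f_ℓ g)` has Hamming weight at least `ℓ · d`, where
`d` is the minimum distance of the cyclic code of length `m` generated by `g`.
Codewords are `(p f_1 g, ..., p f_ℓ g) mod (x^m - 1)` for `p ∈ F_q[x]`, and the
weight of a component is the number of nonzero coefficients of its remainder
modulo `x^m - 1`. -/
theorem asr_minimum_distance {F : Type*} [Field F] [Fintype F] (m ℓ : ℕ) (hm : 0 < m)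
    (hl : 0 < ℓ) (g h : Polynomial F) (hgh : (X : Polynomial F) ^ m - 1 = g * h)
    (f : Fin ℓ → Polynomial F) (hf : ∀ i, IsCoprime (f i) h)
    (d : ℕ)
    (hd_lb : ∀ p : Polynomial F, (p * g) %ₘ ((X : Polynomial F) ^ m - 1) ≠ 0 →
      d ≤ ((p * g) %ₘ ((X : Polynomial F) ^ m - 1)).support.card)
    (hd_attained : ∃ p : Polynomial F, (p * g) %ₘ ((X : Polynomial F) ^ m - 1) ≠ 0 ∧
      ((p * g) %ₘ ((X : Polynomial F) ^ m - 1)).support.card = d) :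
    ∀ p : Polynomial F,
      (fun i => (p * f i * g) %ₘ ((X : Polynomial F) ^ m - 1) : Fin ℓ → Polynomial F) ≠ 0 →
      ℓ * d ≤ ∑ i : Fin ℓ, ((p * f i * g) %ₘ ((X : Polynomial F) ^ m - 1)).support.card :=
  asr_minimum_distance_general m ℓ hm g h hgh f hf d hd_lb
end
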